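/- Let φ ∈ L²(ℝ²) with φ ≢ 0. Then it is impossible that ∂_x^{-1}∂_y(φ²) ∈ L²(ℝ²) in the sense that ξ₂ (φ²)^(ξ₁,ξ₂)/ξ₁ ∈ L²(ℝ²). More precisely, if η(ξ₁,ξ₂) := ξ₂ (φ²)^(ξ₁,ξ₂)/ξ₁ defines an L² function, then ∫_ℝ φ(x,y)² dx = 0 for a.e. y, which forces φ = 0. -/

import Mathlib

/-!
Since `φ² ∈ L¹`, its Fourier transform is continuous, with value `∫ φ²` at the origin. If this
mass were positive, `|(φ²)^|` would be bounded below near `0`, and on a thin rectangle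
`0 < ξ₁ < δ, δ/2 < ξ₂ < δ` we would get `|η|² ≳ ξ₁⁻²`, which is not integrable at `ξ₁ = 0`.
Hence `∫ φ² = 0`, so `φ = 0` a.e., and then every horizontal slice integral vanishes.
-/

open MeasureTheory

/-- Fourier transform on `ℝ²`. -/
noncomputable def FT2 (g : ℝ × ℝ → ℝ) (ξ : ℝ × ℝ) : ℂ :=
  ∫ p : ℝ × ℝ, Complex.exp (-2 * Real.pi * Complex.I * ((ξ.1 * p.1 + ξ.2 * p.2 : ℝ) : ℂ)) * g p

open Set

theorem continuous_FT2 {g : ℝ × ℝ → ℝ} (hg : Integrable g) : Continuous (FT2 g) := by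
  refine continuous_of_dominated (bound := fun p => ‖g p‖)
    (fun ξ => (Continuous.aestronglyMeasurable (by fun_prop)).mul
      (Complex.continuous_ofReal.comp_aestronglyMeasurable hg.1))
    (fun ξ => ae_of_all _ fun p => ?_) hg.norm (ae_of_all _ fun p => by fun_prop)
  simp [Complex.norm_exp]

theorem FT2_zero (g : ℝ × ℝ → ℝ) : FT2 g 0 = ∫ p, g p := by
  simp [FT2]
  exact integral_ofReal

theorem not_integrableOn_inv_sq_fst {a : ℝ} (ha : 0 < a) {t : Set ℝ} (ht₀ : volume t ≠ 0)
    (ht : volume t ≠ ⊤) :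
    ¬ IntegrableOn (fun ξ : ℝ × ℝ => (ξ.1 ^ 2)⁻¹) (Ioo 0 a ×ˢ t) := by
  intro h
  rw [IntegrableOn, Measure.volume_eq_prod, ← Measure.prod_restrict] at h
  have hslice := ((integrable_prod_iff h.1).mp h).2
  simp only [integral_const, measureReal_restrict_apply_univ, smul_eq_mul] at hslice
  have ht_real : volume.real t ≠ 0 := by
    simp [measureReal_def, ENNReal.toReal_eq_zero_iff, ht₀, ht]
  have hrpow : IntegrableOn (fun x : ℝ => x ^ (-2 : ℝ)) (Ioo 0 a) := by
    refine IntegrableOn.congr_fun (hslice.const_mul (volume.real t)⁻¹) (fun x hx => ?_)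
      measurableSet_Ioo
    simp [Real.rpow_neg hx.1.le, ht_real, abs_of_pos hx.1]
  rw [intervalIntegral.integrableOn_Ioo_rpow_iff ha] at hrpow
  norm_num at hrpow

theorem not_memLp_two_div_mul_of_continuousAt {F : ℝ × ℝ → ℂ} (hF : ContinuousAt F 0)
    (hF₀ : F 0 ≠ 0) : ¬ MemLp (fun ξ : ℝ × ℝ => ((ξ.2 / ξ.1 : ℝ) : ℂ) * F ξ) 2 volume := by
  intro hη
  set c := ‖F 0‖ / 2
  have hc : 0 < c := by positivity
  obtain ⟨δ, hδ, hball⟩ := Metric.eventually_nhds_iff.mp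
    (hF.norm.eventually (lt_mem_nhds (half_lt_self (norm_pos_iff.mpr hF₀))))
  set S := Ioo 0 δ ×ˢ Ioo (δ / 2) δ
  have hS_meas : MeasurableSet S := measurableSet_Ioo.prod measurableSet_Ioo
  have hbound : ∀ ξ ∈ S, (δ / 2 * c) ^ 2 * (ξ.1 ^ 2)⁻¹ ≤ ‖((ξ.2 / ξ.1 : ℝ) : ℂ) * F ξ‖ ^ 2 := by
    rintro ⟨x, y⟩ ⟨⟨hx, hxδ⟩, hy, hyδ⟩
    dsimp only at hx hxδ hy hyδ ⊢
    have hy₀ : 0 < y := by linarith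
    have hFξ : c ≤ ‖F (x, y)‖ := by
      refine (hball ?_).le
      rw [Prod.dist_eq, max_lt_iff, Prod.fst_zero, Prod.snd_zero, Real.dist_0_eq_abs,
        Real.dist_0_eq_abs, abs_lt, abs_lt]
      constructor <;> constructor <;> linarith
    rw [norm_mul, Complex.norm_real, Real.norm_eq_abs, abs_of_pos (by positivity), ← inv_pow,
      ← mul_pow]
    gcongr ?_ ^ 2
    calc δ / 2 * c * x⁻¹ = δ / 2 / x * c := by ring
      _ ≤ y / x * ‖F (x, y)‖ := by gcongr
  have hS : IntegrableOn (fun ξ : ℝ × ℝ => (δ / 2 * c) ^ 2 * (ξ.1 ^ 2)⁻¹) S := by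
    refine Integrable.mono' ((memLp_two_iff_integrable_sq_norm hη.1).mp hη).integrableOn
      (by fun_prop) ((ae_restrict_iff' hS_meas).mpr (ae_of_all _ fun ξ hξ => ?_))
    rw [Real.norm_of_nonneg (by positivity)]
    exact hbound ξ hξ
  refine not_integrableOn_inv_sq_fst (t := Ioo (δ / 2) δ) hδ (by simp; linarith) (by simp) ?_
  have hK : (δ / 2 * c) ^ 2 ≠ 0 := by positivity
  exact IntegrableOn.congr_fun (hS.const_mul ((δ / 2 * c) ^ 2)⁻¹)
    (fun ξ _ => inv_mul_cancel_left₀ hK _) hS_meas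

theorem ae_ae_swap_of_ae_prod {α β : Type*} [MeasurableSpace α] [MeasurableSpace β]
    {μ : Measure α} {ν : Measure β} [SFinite μ] [SFinite ν] {p : α × β → Prop}
    (h : ∀ᵐ z ∂μ.prod ν, p z) : ∀ᵐ y ∂ν, ∀ᵐ x ∂μ, p (x, y) :=
  Measure.ae_ae_of_ae_prod (Measure.measurePreserving_swap.quasiMeasurePreserving.ae h)

/-- Obstruction to the higher KP I conservation laws: a nonzero `φ ∈ L²(ℝ²)` cannot satisfy
`∂_x^{-1}∂_y(φ²) ∈ L²(ℝ²)`. If `η(ξ) = (ξ₂/ξ₁)·(φ²)^(ξ)` is in `L²`, then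
`∫ φ(x,y)² dx = 0` for a.e. `y`, which forces `φ = 0`. -/
theorem kp_zero_mass_obstruction (φ : ℝ × ℝ → ℝ)
    (hφ : MemLp φ 2 (volume : Measure (ℝ × ℝ)))
    (hη : MemLp (fun ξ : ℝ × ℝ => ((ξ.2 / ξ.1 : ℝ) : ℂ) * FT2 (fun p => (φ p) ^ 2) ξ) 2
      (volume : Measure (ℝ × ℝ))) :
    (∀ᵐ y : ℝ, (∫ x : ℝ, (φ (x, y)) ^ 2) = 0) ∧ φ =ᵐ[volume] 0 := by
  have hsq : Integrable (fun p => φ p ^ 2) := hφ.integrable_sq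
  have hmass : ∫ p, φ p ^ 2 = 0 := by
    by_contra hne
    refine not_memLp_two_div_mul_of_continuousAt (continuous_FT2 hsq).continuousAt ?_ hη
    rwa [FT2_zero, Complex.ofReal_ne_zero]
  have hφ₀ : φ =ᵐ[volume] 0 := by
    filter_upwards [(integral_eq_zero_iff_of_nonneg (fun p => sq_nonneg (φ p)) hsq).mp hmass]
      with p hp
    exact pow_eq_zero_iff two_ne_zero |>.mp hp
  refine ⟨?_, hφ₀⟩
  rw [Measure.volume_eq_prod] at hφ₀
  filter_upwards [ae_ae_swap_of_ae_prod hφ₀] with y hy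
  have hslice : (fun x => φ (x, y) ^ 2) =ᵐ[volume] 0 := hy.mono fun x hx => by simp [hx]
  simp [integral_congr_ae hslice]
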